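/- The Cauchy–Schwarz divergence between two univariate Gaussians has the closed form D_CS(φ(·|μ₁,σ₁²), φ(·|μ₂,σ₂²)) = -log φ(μ₁ | μ₂, σ₁² + σ₂²) - (1/4)·log(4πσ₁² · 4πσ₂²), where D_CS(p,q) = -log( ∫ p q / sqrt(∫ p² · ∫ q²) ). -/

import Mathlib

/-!
The product of two Gaussian densities is again a Gaussian density in `x`, scaled by the constant
`φ(μ₁ | μ₂, σ₁² + σ₂²)` (complete the square in the exponent). Integrating gives
`∫ p q = φ(μ₁ | μ₂, σ₁² + σ₂²)`, and in particular `∫ p² = φ(m | m, 2σ²) = (4πσ²)^(-1/2)`;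
the closed form is then arithmetic with logarithms.
-/

open MeasureTheory

noncomputable def gpdf (m v x : ℝ) : ℝ :=
  (Real.sqrt (2 * Real.pi * v))⁻¹ * Real.exp (-(x - m) ^ 2 / (2 * v))

lemma gpdf_self (m v : ℝ) : gpdf m v m = (Real.sqrt (2 * Real.pi * v))⁻¹ := by
  simp [gpdf]

lemma gpdf_eq_gaussianPDFReal (m : ℝ) {v : ℝ} (hv : 0 ≤ v) (x : ℝ) :
    gpdf m v x = ProbabilityTheory.gaussianPDFReal m v.toNNReal x := by
  simp [ProbabilityTheory.gaussianPDFReal, gpdf, Real.coe_toNNReal _ hv]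

lemma gpdf_pos (m : ℝ) {v : ℝ} (hv : 0 < v) (x : ℝ) : 0 < gpdf m v x := by
  rw [gpdf_eq_gaussianPDFReal m hv.le]
  exact ProbabilityTheory.gaussianPDFReal_pos _ _ _ (by simpa using hv)

lemma integral_gpdf (m : ℝ) {v : ℝ} (hv : 0 < v) : ∫ x, gpdf m v x = 1 := by
  simp_rw [gpdf_eq_gaussianPDFReal m hv.le]
  exact ProbabilityTheory.integral_gaussianPDFReal_eq_one _ (by simpa using hv)

lemma gpdf_mul_gpdf (μ₁ μ₂ : ℝ) {v₁ v₂ : ℝ} (hv₁ : 0 < v₁) (hv₂ : 0 < v₂) (x : ℝ) :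
    gpdf μ₁ v₁ x * gpdf μ₂ v₂ x
      = gpdf μ₂ (v₁ + v₂) μ₁
        * gpdf ((v₂ * μ₁ + v₁ * μ₂) / (v₁ + v₂)) (v₁ * v₂ / (v₁ + v₂)) x := by
  have hs : 0 < v₁ + v₂ := by linarith
  unfold gpdf
  simp only [mul_mul_mul_comm _ (Real.exp _), ← mul_inv, ← Real.exp_add]
  rw [← Real.sqrt_mul (by positivity), ← Real.sqrt_mul (by positivity)]
  congr 2
  · field_simp
  · field_simp
    ring

lemma integral_gpdf_mul_gpdf (μ₁ μ₂ : ℝ) {v₁ v₂ : ℝ} (hv₁ : 0 < v₁) (hv₂ : 0 < v₂) :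
    ∫ x, gpdf μ₁ v₁ x * gpdf μ₂ v₂ x = gpdf μ₂ (v₁ + v₂) μ₁ := by
  simp_rw [gpdf_mul_gpdf μ₁ μ₂ hv₁ hv₂]
  rw [integral_const_mul, integral_gpdf _ (by positivity), mul_one]

lemma integral_gpdf_sq (m : ℝ) {v : ℝ} (hv : 0 < v) :
    ∫ x, gpdf m v x ^ 2 = (Real.sqrt (4 * Real.pi * v))⁻¹ := by
  simp_rw [sq]
  rw [integral_gpdf_mul_gpdf m m hv hv, gpdf_self]
  ring_nf

/-- closed form of the Cauchy–Schwarz divergence between two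
univariate Gaussians. -/
theorem stmt_10 (μ₁ μ₂ v₁ v₂ : ℝ) (hv₁ : 0 < v₁) (hv₂ : 0 < v₂) :
    -Real.log ((∫ x : ℝ, gpdf μ₁ v₁ x * gpdf μ₂ v₂ x)
        / Real.sqrt ((∫ x : ℝ, (gpdf μ₁ v₁ x) ^ 2) * ∫ x : ℝ, (gpdf μ₂ v₂ x) ^ 2))
      = -Real.log (gpdf μ₂ (v₁ + v₂) μ₁)
        - (1 / 4) * Real.log ((4 * Real.pi * v₁) * (4 * Real.pi * v₂)) := by
  have h₁ : 0 < 4 * Real.pi * v₁ := by positivity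
  have h₂ : 0 < 4 * Real.pi * v₂ := by positivity
  rw [integral_gpdf_mul_gpdf μ₁ μ₂ hv₁ hv₂, integral_gpdf_sq _ hv₁, integral_gpdf_sq _ hv₂,
    Real.log_div (gpdf_pos _ (by positivity) _).ne' (by positivity),
    Real.log_sqrt (by positivity), Real.log_mul (by positivity) (by positivity),
    Real.log_inv, Real.log_inv, Real.log_sqrt h₁.le, Real.log_sqrt h₂.le,
    Real.log_mul h₁.ne' h₂.ne']
  ring
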